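/- Let K ∈ ℝ, N ∈ (1,∞), D > 0 (with D ≤ π√((N−1)/K) if K > 0). For every a ∈ (0,D), the function h^a_{K,N,D} satisfies ∫₀ᴰ h^a_{K,N,D}(x) dx = 1 and is an MCP(K,N)-density on [0,D]. -/
import Mathlib


open MeasureTheory Filter

noncomputable section

/-- The comparison function `s_κ(θ)`:
`sin(√κ·θ)/√κ` if `κ > 0`, `θ` if `κ = 0`, `sinh(√(−κ)·θ)/√(−κ)` if `κ < 0`. -/
def sK (κ θ : ℝ) : ℝ :=
  if 0 < κ then Real.sin (Real.sqrt κ * θ) / Real.sqrt κ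
  else if κ = 0 then θ
  else Real.sinh (Real.sqrt (-κ) * θ) / Real.sqrt (-κ)

/-- `h` is an `MCP(K,N)`-density on the interval `I ⊆ ℝ`: it is a nonnegative Borel
function satisfying
`h(t·x₁+(1−t)·x₀) ≥ (s_{K/(N−1)}((1−t)|x₁−x₀|)/s_{K/(N−1)}(|x₁−x₀|))^{N−1}·h(x₀)`
for all `x₀, x₁ ∈ I`, `t ∈ [0,1]`; when `x₀ = x₁` the coefficient is interpreted as `1−t`,
and when `K > 0` and `|x₁−x₀| ≥ π√((N−1)/K)` the coefficient is `+∞`, forcing `h x₀ = 0`. -/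
def IsMCPDensity (K N : ℝ) (I : Set ℝ) (h : ℝ → ℝ) : Prop :=
  Measurable h ∧ (∀ x ∈ I, 0 ≤ h x) ∧
  ∀ x₀ ∈ I, ∀ x₁ ∈ I, ∀ t ∈ Set.Icc (0:ℝ) 1,
    (x₀ = x₁ → (1 - t) * h x₀ ≤ h x₀) ∧
    (x₀ ≠ x₁ →
      ((0 < K ∧ Real.pi * Real.sqrt ((N - 1) / K) ≤ |x₁ - x₀|) → h x₀ = 0) ∧
      (¬(0 < K ∧ Real.pi * Real.sqrt ((N - 1) / K) ≤ |x₁ - x₀|) →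
        (sK (K / (N - 1)) ((1 - t) * |x₁ - x₀|) / sK (K / (N - 1)) |x₁ - x₀|) ^ (N - 1) * h x₀
          ≤ h (t * x₁ + (1 - t) * x₀)))

/-- `h` is a `CD(K,N)`-density on the interval `I ⊆ ℝ`. -/
def IsCDDensity (K N : ℝ) (I : Set ℝ) (h : ℝ → ℝ) : Prop :=
  (∀ x ∈ I, 0 ≤ h x) ∧
  ∀ x₀ ∈ I, ∀ x₁ ∈ I, x₀ < x₁ → ∀ t ∈ Set.Icc (0:ℝ) 1,
    (sK (K / (N - 1)) ((1 - t) * (x₁ - x₀)) / sK (K / (N - 1)) (x₁ - x₀)) * h x₀ ^ (1 / (N - 1))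
      + (sK (K / (N - 1)) (t * (x₁ - x₀)) / sK (K / (N - 1)) (x₁ - x₀)) * h x₁ ^ (1 / (N - 1))
      ≤ h ((1 - t) * x₀ + t * x₁) ^ (1 / (N - 1))

/-- The lower-bound function `f_{K,N,D}`. -/
def fKND (K N D : ℝ) (x : ℝ) : ℝ :=
  if x = 0 ∨ x = D then 0
  else ((∫ y in (0:ℝ)..x, (sK (K / (N - 1)) (D - y) / sK (K / (N - 1)) (D - x)) ^ (N - 1)) +
        (∫ y in x..D, (sK (K / (N - 1)) y / sK (K / (N - 1)) x) ^ (N - 1)))⁻¹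

/-- The model density `h^a_{K,N,D}`. -/
def hKND (K N D a : ℝ) (x : ℝ) : ℝ :=
  if x ≤ a then fKND K N D a * (sK (K / (N - 1)) (D - x) / sK (K / (N - 1)) (D - a)) ^ (N - 1)
  else fKND K N D a * (sK (K / (N - 1)) x / sK (K / (N - 1)) a) ^ (N - 1)

/-- `v_{K,N,D}(a) = ∫₀ᵃ h^a_{K,N,D}(x) dx`. -/
def vKND (K N D a : ℝ) : ℝ := ∫ x in (0:ℝ)..a, hKND K N D a x

/-- The (outer) Minkowski content of `A` with respect to `μ`:
`liminf_{ε→0⁺} (μ(Aᵉ) − μ(A))/ε` where `Aᵉ` is the open `ε`-neighbourhood of `A`. -/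
def mink (μ : Measure ℝ) (A : Set ℝ) : ℝ :=
  Filter.liminf (fun ε : ℝ => ((μ (Metric.thickening ε A)).toReal - (μ A).toReal) / ε)
    (nhdsWithin 0 (Set.Ioi 0))

/-- The measure `μ_h = h · Leb` restricted to `[0,D]`. -/
def muh (h : ℝ → ℝ) (D : ℝ) : Measure ℝ :=
  (volume.restrict (Set.Icc (0:ℝ) D)).withDensity (fun x => ENNReal.ofReal (h x))

/-- The restricted one-dimensional isoperimetric profile `Ĩ_{K,N,D}(v)` over
`MCP(K,N)`-densities on `[0,D]` integrating to `1`. -/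
def Itilde (K N D v : ℝ) : ℝ :=
  sInf { p : ℝ | ∃ h : ℝ → ℝ, IsMCPDensity K N (Set.Icc 0 D) h ∧
    (∫ x in (0:ℝ)..D, h x) = 1 ∧
    ∃ A : Set ℝ, MeasurableSet A ∧ A ⊆ Set.Icc 0 D ∧ (muh h D A).toReal = v ∧
      p = mink (muh h D) A }

/-- The restricted one-dimensional isoperimetric profile `Ĩ^{CD}_{K,N,D}(v)` over
`CD(K,N)`-densities on `[0,D]` integrating to `1`. -/
def ItildeCD (K N D v : ℝ) : ℝ :=
  sInf { p : ℝ | ∃ h : ℝ → ℝ, IsCDDensity K N (Set.Icc 0 D) h ∧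
    (∫ x in (0:ℝ)..D, h x) = 1 ∧
    ∃ A : Set ℝ, MeasurableSet A ∧ A ⊆ Set.Icc 0 D ∧ (muh h D A).toReal = v ∧
      p = mink (muh h D) A }


lemma sK_cont (κ : ℝ) : Continuous (sK κ) := by
  unfold sK
  split_ifs <;> fun_prop

lemma sK_nonneg {κ θ : ℝ} (h0 : 0 ≤ θ) (hπ : 0 < κ → Real.sqrt κ * θ ≤ Real.pi) :
    0 ≤ sK κ θ := by
  unfold sK
  split_ifs with h1 h2
  · have hs : 0 < Real.sqrt κ := Real.sqrt_pos.mpr h1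
    exact div_nonneg (Real.sin_nonneg_of_nonneg_of_le_pi (by positivity) (hπ h1)) hs.le
  · exact h0
  · have hneg : 0 < -κ := by
      rcases lt_trichotomy κ 0 with h | h | h
      · linarith
      · exact absurd h h2
      · exact absurd h h1
    have hs : 0 < Real.sqrt (-κ) := Real.sqrt_pos.mpr hneg
    exact div_nonneg (by positivity) hs.le

lemma sK_pos {κ θ : ℝ} (h0 : 0 < θ) (hπ : 0 < κ → Real.sqrt κ * θ < Real.pi) :
    0 < sK κ θ := by
  unfold sK
  split_ifs with h1 h2
  · have hs : 0 < Real.sqrt κ := Real.sqrt_pos.mpr h1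
    exact div_pos (Real.sin_pos_of_pos_of_lt_pi (by positivity) (hπ h1)) hs
  · exact h0
  · have hneg : 0 < -κ := by
      rcases lt_trichotomy κ 0 with h | h | h
      · linarith
      · exact absurd h h2
      · exact absurd h h1
    have hs : 0 < Real.sqrt (-κ) := Real.sqrt_pos.mpr hneg
    exact div_pos (by positivity) hs

lemma sK_ident1 (κ b x a : ℝ) :
    sK κ (b - x) * sK κ a = sK κ x * sK κ (b - a) - sK κ b * sK κ (x - a) := by
  unfold sK
  split_ifs with h1 h2
  · have hs : Real.sqrt κ ≠ 0 := (Real.sqrt_pos.mpr h1).ne'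
    have e1 : Real.sqrt κ * (b - x) = Real.sqrt κ * b - Real.sqrt κ * x := by ring
    have e2 : Real.sqrt κ * (b - a) = Real.sqrt κ * b - Real.sqrt κ * a := by ring
    have e3 : Real.sqrt κ * (x - a) = Real.sqrt κ * x - Real.sqrt κ * a := by ring
    rw [e1, e2, e3, Real.sin_sub, Real.sin_sub, Real.sin_sub]
    field_simp
    ring
  · ring
  · have hneg : 0 < -κ := by
      rcases lt_trichotomy κ 0 with h | h | h
      · linarith
      · exact absurd h h2
      · exact absurd h h1
    have hs : Real.sqrt (-κ) ≠ 0 := (Real.sqrt_pos.mpr hneg).ne'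
    have e1 : Real.sqrt (-κ) * (b - x) = Real.sqrt (-κ) * b - Real.sqrt (-κ) * x := by ring
    have e2 : Real.sqrt (-κ) * (b - a) = Real.sqrt (-κ) * b - Real.sqrt (-κ) * a := by ring
    have e3 : Real.sqrt (-κ) * (x - a) = Real.sqrt (-κ) * x - Real.sqrt (-κ) * a := by ring
    rw [e1, e2, e3, Real.sinh_sub, Real.sinh_sub, Real.sinh_sub]
    field_simp
    ring

lemma sK_ident2 (κ d q t : ℝ) :
    sK κ ((1 - t) * d) * sK κ q + sK κ (t * d) * sK κ (q + d)
      = sK κ d * sK κ (q + t * d) := by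
  unfold sK
  split_ifs with h1 h2
  · have hs : Real.sqrt κ ≠ 0 := (Real.sqrt_pos.mpr h1).ne'
    have e1 : Real.sqrt κ * ((1 - t) * d) = Real.sqrt κ * d - Real.sqrt κ * (t * d) := by ring
    have e2 : Real.sqrt κ * (q + d) = Real.sqrt κ * q + Real.sqrt κ * d := by ring
    have e3 : Real.sqrt κ * (q + t * d) = Real.sqrt κ * q + Real.sqrt κ * (t * d) := by ring
    rw [e1, e2, e3, Real.sin_sub, Real.sin_add, Real.sin_add]
    field_simp
    ring
  · ring
  · have hneg : 0 < -κ := by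
      rcases lt_trichotomy κ 0 with h | h | h
      · linarith
      · exact absurd h h2
      · exact absurd h h1
    have hs : Real.sqrt (-κ) ≠ 0 := (Real.sqrt_pos.mpr hneg).ne'
    have e1 : Real.sqrt (-κ) * ((1 - t) * d) = Real.sqrt (-κ) * d - Real.sqrt (-κ) * (t * d) := by
      ring
    have e2 : Real.sqrt (-κ) * (q + d) = Real.sqrt (-κ) * q + Real.sqrt (-κ) * d := by ring
    have e3 : Real.sqrt (-κ) * (q + t * d) = Real.sqrt (-κ) * q + Real.sqrt (-κ) * (t * d) := by
      ring
    rw [e1, e2, e3, Real.sinh_sub, Real.sinh_add, Real.sinh_add]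
    field_simp
    ring

/-- Lemma: for every `a ∈ (0,D)` the model density `h^a_{K,N,D}` integrates to `1`
and is an `MCP(K,N)`-density on `[0,D]`. -/
theorem hKND_integral_one_and_mcp (K N D : ℝ) (hN : 1 < N) (hD : 0 < D)
    (hDK : 0 < K → D ≤ Real.pi * Real.sqrt ((N - 1) / K)) :
    ∀ a ∈ Set.Ioo (0:ℝ) D,
      (∫ x in (0:ℝ)..D, hKND K N D a x) = 1 ∧
      IsMCPDensity K N (Set.Icc 0 D) (hKND K N D a) := by
  intro a ha
  obtain ⟨ha0, haD⟩ := ha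
  have hN1 : 0 < N - 1 := by linarith
  set κ := K / (N - 1) with hκdef
  have hκK : 0 < κ → 0 < K := by
    intro h
    by_contra hK
    push_neg at hK
    have : κ ≤ 0 := div_nonpos_of_nonpos_of_nonneg hK hN1.le
    linarith
  have hKκ : 0 < K → 0 < κ := fun h => div_pos h hN1
  have hinv : 0 < K → Real.sqrt ((N - 1) / K) = (Real.sqrt κ)⁻¹ := by
    intro _
    rw [show (N - 1) / K = κ⁻¹ by rw [hκdef, inv_div], Real.sqrt_inv]
  have hDπ : 0 < κ → Real.sqrt κ * D ≤ Real.pi := by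
    intro hκ
    have hK := hκK hκ
    have hs : (0:ℝ) < Real.sqrt κ := Real.sqrt_pos.mpr hκ
    have h1 : D ≤ Real.pi * (Real.sqrt κ)⁻¹ := by rw [← hinv hK]; exact hDK hK
    calc Real.sqrt κ * D ≤ Real.sqrt κ * (Real.pi * (Real.sqrt κ)⁻¹) :=
          mul_le_mul_of_nonneg_left h1 hs.le
      _ = Real.pi := by field_simp
  have hsκ : ∀ θ : ℝ, 0 ≤ θ → θ ≤ D → 0 ≤ sK κ θ := fun θ h1 h2 =>
    sK_nonneg h1 fun hκ =>
      le_trans (mul_le_mul_of_nonneg_left h2 (Real.sqrt_nonneg κ)) (hDπ hκ)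
  have hsp : ∀ θ : ℝ, 0 < θ → θ < D → 0 < sK κ θ := fun θ h1 h2 =>
    sK_pos h1 fun hκ =>
      lt_of_lt_of_le (mul_lt_mul_of_pos_left h2 (Real.sqrt_pos.mpr hκ)) (hDπ hκ)
  have hsa : 0 < sK κ a := hsp a ha0 haD
  have hsDa : 0 < sK κ (D - a) := hsp _ (by linarith) (by linarith)
  have hrpc : Continuous fun x : ℝ => x ^ (N - 1) := by
    rw [continuous_iff_continuousAt]
    intro x
    exact Real.continuousAt_rpow_const x _ (Or.inr hN1.le)
  have hG1c : Continuous fun x : ℝ => (sK κ (D - x) / sK κ (D - a)) ^ (N - 1) :=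
    hrpc.comp (((sK_cont κ).comp (continuous_const.sub continuous_id)).div_const _)
  have hG2c : Continuous fun x : ℝ => (sK κ x / sK κ a) ^ (N - 1) :=
    hrpc.comp ((sK_cont κ).div_const _)
  have hG1nn : ∀ x : ℝ, 0 ≤ x → x ≤ D → 0 ≤ (sK κ (D - x) / sK κ (D - a)) ^ (N - 1) :=
    fun x h1 h2 => Real.rpow_nonneg (div_nonneg (hsκ _ (by linarith) (by linarith)) hsDa.le) _
  have hG2nn : ∀ x : ℝ, 0 ≤ x → x ≤ D → 0 ≤ (sK κ x / sK κ a) ^ (N - 1) :=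
    fun x h1 h2 => Real.rpow_nonneg (div_nonneg (hsκ _ h1 h2) hsa.le) _
  have hG1a : (sK κ (D - a) / sK κ (D - a)) ^ (N - 1) = 1 := by
    rw [div_self hsDa.ne', Real.one_rpow]
  have hG2a : (sK κ a / sK κ a) ^ (N - 1) = 1 := by rw [div_self hsa.ne', Real.one_rpow]
  have hI1 : (0:ℝ) ≤ ∫ y in (0:ℝ)..a, (sK κ (D - y) / sK κ (D - a)) ^ (N - 1) :=
    intervalIntegral.integral_nonneg ha0.le fun u hu => hG1nn u hu.1 (by linarith [hu.2])
  have hI2 : (0:ℝ) < ∫ y in a..D, (sK κ y / sK κ a) ^ (N - 1) :=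
    intervalIntegral.intervalIntegral_pos_of_pos_on
      (hG2c.intervalIntegrable a D)
      (fun x hx => Real.rpow_pos_of_pos (div_pos (hsp x (by linarith [hx.1]) hx.2) hsa) _)
      haD
  set S : ℝ := (∫ y in (0:ℝ)..a, (sK κ (D - y) / sK κ (D - a)) ^ (N - 1)) +
      ∫ y in a..D, (sK κ y / sK κ a) ^ (N - 1) with hSdef
  have hS : 0 < S := by rw [hSdef]; exact add_pos_of_nonneg_of_pos hI1 hI2
  have hfval : fKND K N D a = S⁻¹ := by
    have hcond : ¬(a = 0 ∨ a = D) := by push_neg; exact ⟨ha0.ne', haD.ne⟩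
    unfold fKND
    rw [if_neg hcond, ← hκdef, hSdef]
  have hfpos : 0 < fKND K N D a := by rw [hfval]; exact inv_pos.mpr hS
  have hEq1 : Set.EqOn (hKND K N D a)
      (fun x => fKND K N D a * (sK κ (D - x) / sK κ (D - a)) ^ (N - 1)) (Set.uIcc 0 a) := by
    intro x hx
    rw [Set.uIcc_of_le ha0.le] at hx
    unfold hKND
    rw [if_pos hx.2, ← hκdef]
  have hEq2 : Set.EqOn (hKND K N D a)
      (fun x => fKND K N D a * (sK κ x / sK κ a) ^ (N - 1)) (Set.uIcc a D) := by
    intro x hx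
    rw [Set.uIcc_of_le haD.le] at hx
    unfold hKND
    rw [← hκdef]
    rcases lt_or_ge a x with h | h
    · rw [if_neg (not_le.mpr h)]
    · have hxa : x = a := le_antisymm h hx.1
      rw [if_pos h, hxa, hG1a]
      simp [hG2a]
  have hInt1 : IntervalIntegrable (hKND K N D a) volume 0 a :=
    ((continuous_const.mul hG1c).continuousOn.congr hEq1).intervalIntegrable
  have hInt2 : IntervalIntegrable (hKND K N D a) volume a D :=
    ((continuous_const.mul hG2c).continuousOn.congr hEq2).intervalIntegrable
  have hint : (∫ x in (0:ℝ)..D, hKND K N D a x) = 1 := by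
    rw [← intervalIntegral.integral_add_adjacent_intervals hInt1 hInt2,
      intervalIntegral.integral_congr hEq1, intervalIntegral.integral_congr hEq2,
      intervalIntegral.integral_const_mul, intervalIntegral.integral_const_mul, hfval,
      ← mul_add, ← hSdef]
    exact inv_mul_cancel₀ hS.ne'
  have hnnAll : ∀ x : ℝ, 0 ≤ x → x ≤ D → 0 ≤ hKND K N D a x := by
    intro x h1 h2
    unfold hKND
    rw [← hκdef]
    split_ifs
    · exact mul_nonneg hfpos.le (hG1nn x h1 h2)
    · exact mul_nonneg hfpos.le (hG2nn x h1 h2)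
  refine ⟨hint, ?_, fun x hx => hnnAll x hx.1 hx.2, ?_⟩
  · unfold hKND
    exact Measurable.ite (measurableSet_le measurable_id measurable_const)
      ((continuous_const.mul hG1c).measurable) ((continuous_const.mul hG2c).measurable)
  rintro x₀ ⟨hx₀0, hx₀D⟩ x₁ ⟨hx₁0, hx₁D⟩ t ⟨ht0, ht1⟩
  constructor
  · intro _
    linarith [mul_nonneg ht0 (hnnAll x₀ hx₀0 hx₀D)]
  intro hne
  constructor
  · rintro ⟨hK, hdist⟩
    have hκ := hKκ hK
    have hd_le : |x₁ - x₀| ≤ D := abs_le.mpr ⟨by linarith, by linarith⟩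
    have hDeq : D = Real.pi * Real.sqrt ((N - 1) / K) :=
      le_antisymm (hDK hK) (le_trans hdist hd_le)
    have hsD0 : sK κ D = 0 := by
      have hπ : Real.sqrt κ * D = Real.pi := by
        rw [hDeq, hinv hK]
        have hs : Real.sqrt κ ≠ 0 := (Real.sqrt_pos.mpr hκ).ne'
        field_simp
      unfold sK
      rw [if_pos hκ, hπ, Real.sin_pi, zero_div]
    have hcases : x₀ = 0 ∨ x₀ = D := by
      have habs : D ≤ |x₁ - x₀| := hDeq ▸ hdist
      rcases abs_cases (x₁ - x₀) with ⟨he, _⟩ | ⟨he, _⟩ <;> rw [he] at habs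
      · left; linarith
      · right; linarith
    rcases hcases with h0 | h0 <;> subst h0
    · unfold hKND
      rw [if_pos ha0.le, ← hκdef]
      rw [sub_zero, hsD0, zero_div, Real.zero_rpow hN1.ne', mul_zero]
    · unfold hKND
      rw [if_neg (not_le.mpr haD), ← hκdef]
      rw [hsD0, zero_div, Real.zero_rpow hN1.ne', mul_zero]
  intro hnd
  rw [← hκdef]
  have hd0 : 0 < |x₁ - x₀| := abs_pos.mpr (sub_ne_zero.mpr (Ne.symm hne))
  have hdD : |x₁ - x₀| ≤ D := abs_le.mpr ⟨by linarith, by linarith⟩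
  have hsd : 0 < sK κ |x₁ - x₀| := by
    apply sK_pos hd0
    intro hκ
    have hK := hκK hκ
    have hlt : |x₁ - x₀| < Real.pi * Real.sqrt ((N - 1) / K) := by
      by_contra hcon
      push_neg at hcon
      exact hnd ⟨hK, hcon⟩
    rw [hinv hK] at hlt
    have hs : (0:ℝ) < Real.sqrt κ := Real.sqrt_pos.mpr hκ
    calc Real.sqrt κ * |x₁ - x₀| < Real.sqrt κ * (Real.pi * (Real.sqrt κ)⁻¹) :=
          mul_lt_mul_of_pos_left hlt hs
      _ = Real.pi := by field_simp
  set d := |x₁ - x₀| with hddef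
  have base : ∀ q s : ℝ, 0 ≤ q → 0 ≤ s → s ≤ 1 → q + d ≤ D →
      sK κ ((1 - s) * d) * sK κ q ≤ sK κ d * sK κ (q + s * d) ∧
      sK κ (s * d) * sK κ (q + d) ≤ sK κ d * sK κ (q + s * d) := by
    intro q s h1 h2 h3 h4
    have hid := sK_ident2 κ d q s
    have hsd1 : 0 ≤ s * d := mul_nonneg h2 hd0.le
    have hsd2 : 0 ≤ (1 - s) * d := mul_nonneg (by linarith) hd0.le
    have hsd3 : s * d ≤ D := by linarith [hsd2, hdD]
    have hsd4 : (1 - s) * d ≤ D := by linarith [hsd1, hdD]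
    have n1 : 0 ≤ sK κ ((1 - s) * d) * sK κ q :=
      mul_nonneg (hsκ _ hsd2 hsd4) (hsκ q h1 (by linarith))
    have n2 : 0 ≤ sK κ (s * d) * sK κ (q + d) :=
      mul_nonneg (hsκ _ hsd1 hsd3) (hsκ _ (by linarith) h4)
    constructor <;> linarith
  have key1 : sK κ ((1 - t) * d) * sK κ (D - x₀)
        ≤ sK κ d * sK κ (D - (t * x₁ + (1 - t) * x₀)) ∧
      sK κ ((1 - t) * d) * sK κ x₀ ≤ sK κ d * sK κ (t * x₁ + (1 - t) * x₀) := by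
    rcases hne.lt_or_gt with hlt | hlt
    · have hde : d = x₁ - x₀ := by rw [hddef]; exact abs_of_pos (by linarith)
      constructor
      · have h := (base (D - x₁) (1 - t) (by linarith) (by linarith) (by linarith)
          (by rw [hde]; linarith)).2
        have e1 : D - x₁ + d = D - x₀ := by rw [hde]; ring
        have e2 : D - x₁ + (1 - t) * d = D - (t * x₁ + (1 - t) * x₀) := by rw [hde]; ring
        rwa [e1, e2] at h
      · have h := (base x₀ t hx₀0 ht0 ht1 (by rw [hde]; linarith)).1
        have e2 : x₀ + t * d = t * x₁ + (1 - t) * x₀ := by rw [hde]; ring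
        rwa [e2] at h
    · have hde : d = x₀ - x₁ := by rw [hddef, abs_sub_comm]; exact abs_of_pos (by linarith)
      constructor
      · have h := (base (D - x₀) t (by linarith) ht0 ht1 (by rw [hde]; linarith)).1
        have e2 : D - x₀ + t * d = D - (t * x₁ + (1 - t) * x₀) := by rw [hde]; ring
        rwa [e2] at h
      · have h := (base x₁ (1 - t) hx₁0 (by linarith) (by linarith) (by rw [hde]; linarith)).2
        have e1 : x₁ + d = x₀ := by rw [hde]; ring
        have e2 : x₁ + (1 - t) * d = t * x₁ + (1 - t) * x₀ := by rw [hde]; ring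
        rwa [e1, e2] at h
  have hxt0 : 0 ≤ t * x₁ + (1 - t) * x₀ :=
    add_nonneg (mul_nonneg ht0 hx₁0) (mul_nonneg (by linarith) hx₀0)
  have hxtD : t * x₁ + (1 - t) * x₀ ≤ D := by
    linarith [mul_nonneg ht0 (by linarith : (0:ℝ) ≤ D - x₁),
      mul_nonneg (by linarith : (0:ℝ) ≤ 1 - t) (by linarith : (0:ℝ) ≤ D - x₀)]
  have hr0 : 0 ≤ sK κ ((1 - t) * d) / sK κ d := by
    apply div_nonneg _ hsd.le
    apply hsκ _ (mul_nonneg (by linarith) hd0.le)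
    linarith [mul_nonneg ht0 hd0.le]
  have hcomp : ∀ x : ℝ, 0 ≤ x → x ≤ D → a ≤ x →
      (sK κ (D - x) / sK κ (D - a)) ^ (N - 1) ≤ (sK κ x / sK κ a) ^ (N - 1) := by
    intro x h1 h2 h3
    have hid := sK_ident1 κ D x a
    have hn : 0 ≤ sK κ D * sK κ (x - a) :=
      mul_nonneg (hsκ D hD.le le_rfl) (hsκ _ (by linarith) (by linarith))
    apply Real.rpow_le_rpow (div_nonneg (hsκ _ (by linarith) (by linarith)) hsDa.le) _ hN1.le
    rw [div_le_div_iff₀ hsDa hsa]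
    linarith
  have hcomp' : ∀ x : ℝ, 0 ≤ x → x ≤ D → x ≤ a →
      (sK κ x / sK κ a) ^ (N - 1) ≤ (sK κ (D - x) / sK κ (D - a)) ^ (N - 1) := by
    intro x h1 h2 h3
    have hid := sK_ident1 κ D a x
    have hn : 0 ≤ sK κ D * sK κ (a - x) :=
      mul_nonneg (hsκ D hD.le le_rfl) (hsκ _ (by linarith) (by linarith))
    apply Real.rpow_le_rpow (div_nonneg (hsκ _ h1 h2) hsa.le) _ hN1.le
    rw [div_le_div_iff₀ hsa hsDa]
    linarith
  have HB1 : (sK κ ((1 - t) * d) / sK κ d) ^ (N - 1) *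
        (sK κ (D - x₀) / sK κ (D - a)) ^ (N - 1)
      ≤ (sK κ (D - (t * x₁ + (1 - t) * x₀)) / sK κ (D - a)) ^ (N - 1) := by
    rw [← Real.mul_rpow hr0 (div_nonneg (hsκ _ (by linarith) (by linarith)) hsDa.le)]
    apply Real.rpow_le_rpow (mul_nonneg hr0
      (div_nonneg (hsκ _ (by linarith) (by linarith)) hsDa.le)) _ hN1.le
    rw [div_mul_div_comm, div_le_div_iff₀ (mul_pos hsd hsDa) hsDa]
    linarith [mul_le_mul_of_nonneg_right key1.1 hsDa.le]
  have HB2 : (sK κ ((1 - t) * d) / sK κ d) ^ (N - 1) * (sK κ x₀ / sK κ a) ^ (N - 1)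
      ≤ (sK κ (t * x₁ + (1 - t) * x₀) / sK κ a) ^ (N - 1) := by
    rw [← Real.mul_rpow hr0 (div_nonneg (hsκ _ hx₀0 hx₀D) hsa.le)]
    apply Real.rpow_le_rpow (mul_nonneg hr0 (div_nonneg (hsκ _ hx₀0 hx₀D) hsa.le)) _ hN1.le
    rw [div_mul_div_comm, div_le_div_iff₀ (mul_pos hsd hsa) hsa]
    linarith [mul_le_mul_of_nonneg_right key1.2 hsa.le]
  rcases le_or_gt x₀ a with hx₀a | hx₀a
  · have e0 : hKND K N D a x₀ = fKND K N D a * (sK κ (D - x₀) / sK κ (D - a)) ^ (N - 1) := by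
      unfold hKND
      rw [if_pos hx₀a, ← hκdef]
    have hup : fKND K N D a *
          (sK κ (D - (t * x₁ + (1 - t) * x₀)) / sK κ (D - a)) ^ (N - 1)
        ≤ hKND K N D a (t * x₁ + (1 - t) * x₀) := by
      unfold hKND
      rw [← hκdef]
      split_ifs with hxa
      · exact le_rfl
      · push_neg at hxa
        exact mul_le_mul_of_nonneg_left
          (hcomp (t * x₁ + (1 - t) * x₀) hxt0 hxtD hxa.le) hfpos.le
    calc (sK κ ((1 - t) * d) / sK κ d) ^ (N - 1) * hKND K N D a x₀
        = fKND K N D a * ((sK κ ((1 - t) * d) / sK κ d) ^ (N - 1) *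
            (sK κ (D - x₀) / sK κ (D - a)) ^ (N - 1)) := by rw [e0]; ring
      _ ≤ fKND K N D a *
            (sK κ (D - (t * x₁ + (1 - t) * x₀)) / sK κ (D - a)) ^ (N - 1) :=
          mul_le_mul_of_nonneg_left HB1 hfpos.le
      _ ≤ hKND K N D a (t * x₁ + (1 - t) * x₀) := hup
  · have e0 : hKND K N D a x₀ = fKND K N D a * (sK κ x₀ / sK κ a) ^ (N - 1) := by
      unfold hKND
      rw [if_neg (not_le.mpr hx₀a), ← hκdef]
    have hup : fKND K N D a * (sK κ (t * x₁ + (1 - t) * x₀) / sK κ a) ^ (N - 1)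
        ≤ hKND K N D a (t * x₁ + (1 - t) * x₀) := by
      unfold hKND
      rw [← hκdef]
      split_ifs with hxa
      · exact mul_le_mul_of_nonneg_left
          (hcomp' (t * x₁ + (1 - t) * x₀) hxt0 hxtD hxa) hfpos.le
      · exact le_rfl
    calc (sK κ ((1 - t) * d) / sK κ d) ^ (N - 1) * hKND K N D a x₀
        = fKND K N D a * ((sK κ ((1 - t) * d) / sK κ d) ^ (N - 1) *
            (sK κ x₀ / sK κ a) ^ (N - 1)) := by rw [e0]; ring
      _ ≤ fKND K N D a * (sK κ (t * x₁ + (1 - t) * x₀) / sK κ a) ^ (N - 1) :=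
          mul_le_mul_of_nonneg_left HB2 hfpos.le
      _ ≤ hKND K N D a (t * x₁ + (1 - t) * x₀) := hup

end
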